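/- arXiv:2605.18106 — 3 statements merged into one kernel-verified Lean document; each statement's English description precedes it below -/
import Mathlib

section
/- Let E be a real inner product space, f : E → ℝ, and G : E → E such that f has gradient G(x) at every x ∈ E and G is Lipschitz with constant L > 0. Assume the μ-Polyak–Łojasiewicz condition: there are μ > 0 and f⋆ ∈ ℝ with f⋆ ≤ f(x) and ‖G(x)‖² ≥ 2μ(f(x) − f⋆) for all x ∈ E. Let T : E → E and 0 < c₁ ≤ c₂ satisfy c₁‖g‖² ≤ ⟪g, T(g)⟫ and ‖T(g)‖² ≤ c₂‖g‖² for all g ∈ E. Then for every γ with 0 < γ < 2c₁/(Lc₂) and every W ∈ E, f(W − γ T(G(W))) − f⋆ ≤ (1 − 2μγ(c₁ − (Lc₂/2)γ)) · (f(W) − f⋆). -/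
/-!
Along the segment `t ↦ x + t • v`, the `L`-Lipschitz gradient makes
`f x + t ⟪G x, v⟫ + (L/2) t² ‖v‖² - f (x + t • v)` nondecreasing, which gives the descent lemma
`f (x + v) ≤ f x + ⟪G x, v⟫ + (L/2) ‖v‖²`. For `v = -γ T (G W)` the two conditions on `T` turn
this into a decrease of at least `γ (c₁ - L c₂ γ / 2) ‖G W‖²`, a nonnegative multiple of
`‖G W‖²` for the admissible step sizes, and the PL inequality bounds `‖G W‖²` below by
`2μ (f W - f⋆)`.
-/

open scoped RealInnerProductSpace

section LipschitzGradient

variable {E : Type*} [NormedAddCommGroup E] [InnerProductSpace ℝ E]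
  {f : E → ℝ} {G : E → E} {L : ℝ}

theorem hasDerivAt_apply_add_smul_of_hasGradientAt [CompleteSpace E]
    (hgrad : ∀ x, HasGradientAt f (G x) x)
    (x v : E) (t : ℝ) :
    HasDerivAt (fun s : ℝ => f (x + s • v)) ⟪G (x + t • v), v⟫ t := by
  have hline : HasDerivAt (fun s : ℝ => x + s • v) v t := by
    simpa using ((hasDerivAt_id t).smul_const v).const_add x
  exact (hgrad (x + t • v)).hasFDerivAt.comp_hasDerivAt t hline

theorem inner_sub_inner_le_of_lipschitz (hlip : ∀ x y, ‖G x - G y‖ ≤ L * ‖x - y‖)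
    (x v : E) {t : ℝ} (ht : 0 ≤ t) :
    ⟪G (x + t • v), v⟫ - ⟪G x, v⟫ ≤ L * t * ‖v‖ ^ 2 :=
  calc ⟪G (x + t • v), v⟫ - ⟪G x, v⟫ = ⟪G (x + t • v) - G x, v⟫ := (inner_sub_left ..).symm
    _ ≤ ‖G (x + t • v) - G x‖ * ‖v‖ := real_inner_le_norm _ _
    _ ≤ L * ‖(x + t • v) - x‖ * ‖v‖ := by gcongr; exact hlip _ _
    _ = L * t * ‖v‖ ^ 2 := by
      rw [add_sub_cancel_left, norm_smul, Real.norm_of_nonneg ht]; ring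

theorem apply_add_le_of_lipschitz_gradient [CompleteSpace E]
    (hgrad : ∀ x, HasGradientAt f (G x) x)
    (hlip : ∀ x y, ‖G x - G y‖ ≤ L * ‖x - y‖) (x v : E) :
    f (x + v) ≤ f x + ⟪G x, v⟫ + L / 2 * ‖v‖ ^ 2 := by
  set φ : ℝ → ℝ := fun t => f x + t * ⟪G x, v⟫ + L / 2 * t ^ 2 * ‖v‖ ^ 2 - f (x + t • v)
  have hφ : ∀ t, HasDerivAt φ (⟪G x, v⟫ + L * t * ‖v‖ ^ 2 - ⟪G (x + t • v), v⟫) t := by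
    intro t
    have hquad : HasDerivAt (fun s : ℝ => f x + s * ⟪G x, v⟫ + L / 2 * s ^ 2 * ‖v‖ ^ 2)
        (⟪G x, v⟫ + L * t * ‖v‖ ^ 2) t := by
      refine ((((hasDerivAt_id t).mul_const ⟪G x, v⟫).const_add (f x)).add
        (((hasDerivAt_pow 2 t).const_mul (L / 2)).mul_const (‖v‖ ^ 2))).congr_deriv ?_
      simp only [Nat.cast_ofNat, one_mul]; ring
    exact hquad.sub (hasDerivAt_apply_add_smul_of_hasGradientAt hgrad x v t)
  have hmono : MonotoneOn φ (Set.Icc 0 1) := by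
    refine monotoneOn_of_deriv_nonneg (convex_Icc 0 1)
      (fun t _ => (hφ t).continuousAt.continuousWithinAt)
      (fun t _ => (hφ t).differentiableAt.differentiableWithinAt) fun t ht => ?_
    rw [interior_Icc] at ht
    rw [(hφ t).deriv]
    linarith [inner_sub_inner_le_of_lipschitz hlip x v ht.1.le]
  have hφ01 : φ 0 ≤ φ 1 := hmono (by simp) (by simp) zero_le_one
  simp only [φ, zero_smul, add_zero, zero_mul, zero_pow two_ne_zero, mul_zero, one_smul, one_mul,
    one_pow, sub_self] at hφ01
  linarith

theorem apply_sub_smul_le_of_lipschitz_gradient [CompleteSpace E]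
    (hgrad : ∀ x, HasGradientAt f (G x) x)
    (hlip : ∀ x y, ‖G x - G y‖ ≤ L * ‖x - y‖) (hL : 0 ≤ L) {c₁ c₂ γ : ℝ} (hγ : 0 ≤ γ)
    {x d : E} (halign : c₁ * ‖G x‖ ^ 2 ≤ ⟪G x, d⟫) (hnorm : ‖d‖ ^ 2 ≤ c₂ * ‖G x‖ ^ 2) :
    f (x - γ • d) ≤ f x - γ * (c₁ - L * c₂ / 2 * γ) * ‖G x‖ ^ 2 := by
  have hdesc := apply_add_le_of_lipschitz_gradient hgrad hlip x (-(γ • d))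
  rw [← sub_eq_add_neg, inner_neg_right, real_inner_smul_right, norm_neg, norm_smul,
    Real.norm_of_nonneg hγ] at hdesc
  have hinner : γ * (c₁ * ‖G x‖ ^ 2) ≤ γ * ⟪G x, d⟫ := by gcongr
  have hsq : L / 2 * γ ^ 2 * ‖d‖ ^ 2 ≤ L / 2 * γ ^ 2 * (c₂ * ‖G x‖ ^ 2) := by gcongr
  linear_combination hdesc + hinner + hsq

end LipschitzGradient

theorem linear_convergence_PL_spectral_optimizer_general
    {E : Type*} [NormedAddCommGroup E] [InnerProductSpace ℝ E] [CompleteSpace E]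
    (f : E → ℝ) (G : E → E) (L : ℝ) (hL : 0 < L)
    (hgrad : ∀ x, HasGradientAt f (G x) x)
    (hlip : ∀ x y, ‖G x - G y‖ ≤ L * ‖x - y‖)
    (μ : ℝ) (fstar : ℝ)
    (hPL : ∀ x, ‖G x‖ ^ 2 ≥ 2 * μ * (f x - fstar))
    (T : E → E) (c₁ c₂ : ℝ) (hc₁ : 0 < c₁) (hc₁₂ : c₁ ≤ c₂)
    (halign : ∀ g : E, c₁ * ‖g‖ ^ 2 ≤ ⟪g, T g⟫)
    (hnorm : ∀ g : E, ‖T g‖ ^ 2 ≤ c₂ * ‖g‖ ^ 2) :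
    ∀ γ : ℝ, 0 < γ → γ < 2 * c₁ / (L * c₂) →
      ∀ W : E,
        f (W - γ • T (G W)) - fstar ≤
          (1 - 2 * μ * γ * (c₁ - L * c₂ / 2 * γ)) * (f W - fstar) := by
  intro γ hγ hγ_lt W
  have hrate : 0 ≤ γ * (c₁ - L * c₂ / 2 * γ) := by
    have := (lt_div_iff₀ (mul_pos hL (hc₁.trans_le hc₁₂))).mp hγ_lt
    exact mul_nonneg hγ.le (by linarith)
  have hdecrease := apply_sub_smul_le_of_lipschitz_gradient hgrad hlip hL.le hγ.le
    (halign (G W)) (hnorm (G W))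
  linear_combination hdecrease + mul_le_mul_of_nonneg_left (hPL W) hrate

/-- Linear convergence under the Polyak–Łojasiewicz condition:
if `f` has an `L`-Lipschitz gradient `G`, satisfies the `μ`-PL inequality
`‖G x‖² ≥ 2μ(f x − f⋆)` relative to a lower bound `f⋆`, and `T` satisfies
`c₁‖g‖² ≤ ⟪g, T g⟫` and `‖T g‖² ≤ c₂‖g‖²` with `0 < c₁ ≤ c₂`, then for every
step size `0 < γ < 2c₁/(Lc₂)` and every `W`,
`f(W − γ T(G W)) − f⋆ ≤ (1 − 2μγ(c₁ − (Lc₂/2)γ))(f(W) − f⋆)`. -/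
theorem linear_convergence_PL_spectral_optimizer
    {E : Type*} [NormedAddCommGroup E] [InnerProductSpace ℝ E] [CompleteSpace E]
    (f : E → ℝ) (G : E → E) (L : ℝ) (hL : 0 < L)
    (hgrad : ∀ x, HasGradientAt f (G x) x)
    (hlip : ∀ x y, ‖G x - G y‖ ≤ L * ‖x - y‖)
    (μ : ℝ) (hμ : 0 < μ) (fstar : ℝ) (hfstar : ∀ x, fstar ≤ f x)
    (hPL : ∀ x, ‖G x‖ ^ 2 ≥ 2 * μ * (f x - fstar))
    (T : E → E) (c₁ c₂ : ℝ) (hc₁ : 0 < c₁) (hc₁₂ : c₁ ≤ c₂)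
    (halign : ∀ g : E, c₁ * ‖g‖ ^ 2 ≤ ⟪g, T g⟫)
    (hnorm : ∀ g : E, ‖T g‖ ^ 2 ≤ c₂ * ‖g‖ ^ 2) :
    ∀ γ : ℝ, 0 < γ → γ < 2 * c₁ / (L * c₂) →
      ∀ W : E,
        f (W - γ • T (G W)) - fstar ≤
          (1 - 2 * μ * γ * (c₁ - L * c₂ / 2 * γ)) * (f W - fstar) :=
  linear_convergence_PL_spectral_optimizer_general f G L hL hgrad hlip μ fstar hPL T c₁ c₂ hc₁ hc₁₂
    halign hnorm
end

section
/- Let E be a real inner product space, f : E → ℝ, and G : E → E such that f has gradient G(x) at every x ∈ E and G is Lipschitz with constant L > 0. Let T : E → E and let W ∈ E be such that G(W) ≠ 0 and ⟪G(W), T(G(W))⟫ > 0, and set R := ⟪G(W), T(G(W))⟫ / ‖T(G(W))‖². Then for every γ > 0, f(W − γ T(G(W))) ≤ f(W) − (γ − Lγ²/(2R)) · ⟪G(W), T(G(W))⟫. In particular, if 0 < γ < 2R/L then f(W − γ T(G(W))) ≤ f(W). -/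
/-! Along the segment `t ↦ x + t • v`, the `L`-Lipschitz gradient makes the slope of
`f` exceed its initial value `⟪G x, v⟫` by at most `L t ‖v‖²`; integrating this in the form
of a monotonicity argument gives the quadratic upper bound
`f (x + v) ≤ f x + ⟪G x, v⟫ + L/2 ‖v‖²`. For the step `v = -γ d` the quadratic term
`L/2 γ² ‖d‖²` is exactly `L γ² / (2R) · ⟪G x, d⟫` with `R = ⟪G x, d⟫ / ‖d‖²`, and the
coefficient `γ - L γ² / (2R)` is nonnegative as soon as `0 ≤ γ < 2R/L`. -/

open scoped RealInnerProductSpace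

section Descent

variable {E : Type*} [NormedAddCommGroup E] [InnerProductSpace ℝ E] [CompleteSpace E]
  {f : E → ℝ} {G : E → E} {L : ℝ}

theorem HasGradientAt.hasDerivAt_comp_add_smul {g x v : E} {t : ℝ}
    (h : HasGradientAt f g (x + t • v)) :
    HasDerivAt (fun s : ℝ => f (x + s • v)) ⟪g, v⟫ t := by
  have hline : HasDerivAt (fun s : ℝ => x + s • v) v t := by
    simpa using ((hasDerivAt_id t).smul_const v).const_add x
  have hcomp : HasDerivAt (fun s : ℝ => f (x + s • v)) (InnerProductSpace.toDual ℝ E g v) t :=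
    h.hasFDerivAt.comp_hasDerivAt t hline
  simpa using hcomp

omit [CompleteSpace E] in
theorem inner_sub_apply_add_smul_le (hlip : ∀ x y, ‖G x - G y‖ ≤ L * ‖x - y‖)
    (x v : E) {t : ℝ} (ht : 0 ≤ t) :
    ⟪G (x + t • v) - G x, v⟫ ≤ L * t * ‖v‖ ^ 2 :=
  calc ⟪G (x + t • v) - G x, v⟫ ≤ ‖G (x + t • v) - G x‖ * ‖v‖ := real_inner_le_norm _ _
    _ ≤ L * ‖(x + t • v) - x‖ * ‖v‖ := by gcongr; exact hlip _ _
    _ = L * t * ‖v‖ ^ 2 := by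
      rw [add_sub_cancel_left, norm_smul, Real.norm_of_nonneg ht]; ring

theorem le_add_inner_add_sq_of_lipschitz_gradient (hgrad : ∀ x, HasGradientAt f (G x) x)
    (hlip : ∀ x y, ‖G x - G y‖ ≤ L * ‖x - y‖) (x v : E) :
    f (x + v) ≤ f x + ⟪G x, v⟫ + L / 2 * ‖v‖ ^ 2 := by
  set gap : ℝ → ℝ := fun t => f x + t * ⟪G x, v⟫ + L * t ^ 2 / 2 * ‖v‖ ^ 2 - f (x + t • v)
  have hgap : ∀ t, HasDerivAt gap (⟪G x, v⟫ + L * t * ‖v‖ ^ 2 - ⟪G (x + t • v), v⟫) t := by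
    intro t
    have hquad : HasDerivAt (fun t : ℝ => f x + t * ⟪G x, v⟫ + L * t ^ 2 / 2 * ‖v‖ ^ 2)
        (⟪G x, v⟫ + L * t * ‖v‖ ^ 2) t := by
      refine ((((hasDerivAt_id t).mul_const ⟪G x, v⟫).const_add (f x)).add
        ((((hasDerivAt_pow 2 t).const_mul L).div_const 2).mul_const (‖v‖ ^ 2))).congr_deriv ?_
      simp only [Nat.cast_ofNat, Nat.add_one_sub_one, pow_one]
      ring
    exact hquad.sub (hgrad (x + t • v)).hasDerivAt_comp_add_smul
  have hmono : MonotoneOn gap (Set.Ici 0) := by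
    refine monotoneOn_of_hasDerivWithinAt_nonneg (convex_Ici 0)
      (fun t _ => (hgap t).continuousAt.continuousWithinAt)
      (fun t _ => (hgap t).hasDerivWithinAt) fun t ht => ?_
    rw [interior_Ici] at ht
    have hslope := inner_sub_apply_add_smul_le hlip x v ht.le
    rw [inner_sub_left] at hslope
    linarith
  have h01 := hmono Set.self_mem_Ici (Set.mem_Ici.2 zero_le_one) zero_le_one
  simp only [gap, zero_smul, add_zero, one_smul] at h01
  linarith

theorem le_sub_mul_inner_of_lipschitz_gradient (hgrad : ∀ x, HasGradientAt f (G x) x)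
    (hlip : ∀ x y, ‖G x - G y‖ ≤ L * ‖x - y‖) (x d : E) (hd : ⟪G x, d⟫ ≠ 0) (γ : ℝ) :
    f (x - γ • d) ≤ f x - (γ - L * γ ^ 2 / (2 * (⟪G x, d⟫ / ‖d‖ ^ 2))) * ⟪G x, d⟫ := by
  have hd0 : d ≠ 0 := by rintro rfl; simp at hd
  have hbound := le_add_inner_add_sq_of_lipschitz_gradient hgrad hlip x (-(γ • d))
  rw [← sub_eq_add_neg, inner_neg_right, real_inner_smul_right, norm_neg, norm_smul,
    Real.norm_eq_abs, mul_pow, sq_abs] at hbound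
  convert hbound using 1
  field_simp
  ring

end Descent

theorem sub_mul_sq_div_nonneg {L R γ : ℝ} (hL : 0 < L) (hR : 0 < R) (hγ : 0 ≤ γ)
    (hγR : γ < 2 * R / L) : 0 ≤ γ - L * γ ^ 2 / (2 * R) := by
  have hLγ : L * γ < 2 * R := by rwa [lt_div_iff₀ hL, mul_comm] at hγR
  have : γ - L * γ ^ 2 / (2 * R) = γ * (2 * R - L * γ) / (2 * R) := by field_simp
  rw [this]
  exact div_nonneg (mul_nonneg hγ (by linarith)) (by linarith)

theorem descent_lemma_ratio_form_general
    {E : Type*} [NormedAddCommGroup E] [InnerProductSpace ℝ E] [CompleteSpace E]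
    (f : E → ℝ) (G : E → E) (L : ℝ) (hL : 0 < L)
    (hgrad : ∀ x, HasGradientAt f (G x) x)
    (hlip : ∀ x y, ‖G x - G y‖ ≤ L * ‖x - y‖)
    (T : E → E) (W : E)
    (hpos : 0 < ⟪G W, T (G W)⟫)
    (R : ℝ) (hR : R = ⟪G W, T (G W)⟫ / ‖T (G W)‖ ^ 2) :
    ∀ γ : ℝ, 0 < γ →
      f (W - γ • T (G W)) ≤ f W - (γ - L * γ ^ 2 / (2 * R)) * ⟪G W, T (G W)⟫ ∧
      (γ < 2 * R / L → f (W - γ • T (G W)) ≤ f W) := by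
  intro γ hγ
  have hT : T (G W) ≠ 0 := by intro h; simp [h] at hpos
  have hRpos : 0 < R := hR ▸ div_pos hpos (by positivity)
  have hdescent : f (W - γ • T (G W)) ≤ f W - (γ - L * γ ^ 2 / (2 * R)) * ⟪G W, T (G W)⟫ :=
    hR ▸ le_sub_mul_inner_of_lipschitz_gradient hgrad hlip W (T (G W)) hpos.ne' γ
  refine ⟨hdescent, fun hγR => ?_⟩
  have := mul_nonneg (sub_mul_sq_div_nonneg hL hRpos hγ.le hγR) hpos.le
  linarith

/-- Descent lemma in ratio form: if `f` has an `L`-Lipschitz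
gradient `G`, `G W ≠ 0`, `⟪G W, T (G W)⟫ > 0`, and
`R = ⟪G W, T (G W)⟫ / ‖T (G W)‖²` is the spectral advantage ratio, then for
every `γ > 0`, `f(W − γ T(G W)) ≤ f(W) − (γ − Lγ²/(2R)) ⟪G W, T (G W)⟫`;
in particular `f(W − γ T(G W)) ≤ f(W)` whenever `0 < γ < 2R/L`. -/
theorem descent_lemma_ratio_form
    {E : Type*} [NormedAddCommGroup E] [InnerProductSpace ℝ E] [CompleteSpace E]
    (f : E → ℝ) (G : E → E) (L : ℝ) (hL : 0 < L)
    (hgrad : ∀ x, HasGradientAt f (G x) x)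
    (hlip : ∀ x y, ‖G x - G y‖ ≤ L * ‖x - y‖)
    (T : E → E) (W : E)
    (hGW : G W ≠ 0) (hpos : 0 < ⟪G W, T (G W)⟫)
    (R : ℝ) (hR : R = ⟪G W, T (G W)⟫ / ‖T (G W)‖ ^ 2) :
    ∀ γ : ℝ, 0 < γ →
      f (W - γ • T (G W)) ≤ f W - (γ - L * γ ^ 2 / (2 * R)) * ⟪G W, T (G W)⟫ ∧
      (γ < 2 * R / L → f (W - γ • T (G W)) ≤ f W) :=
  descent_lemma_ratio_form_general f G L hL hgrad hlip T W hpos R hR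
end

section
/- Let f be a real-valued function on the space of v×d real matrices equipped with the Frobenius inner product ⟪A, B⟫_F = tr(AᵀB), such that f has gradient ∇f(W) at every W and ∇f is Lipschitz with constant L > 0 in the Frobenius norm. Assume the μ-Polyak–Łojasiewicz condition: there are μ > 0 and f⋆ ∈ ℝ with f⋆ ≤ f(W) and ‖∇f(W)‖_F² ≥ 2μ(f(W) − f⋆) for all W. Let η : ℝ → ℝ and 0 < η̲ ≤ η̄ satisfy η̲ ≤ η(t) ≤ η̄ for all t ≥ 0, and for a matrix M let D_η(M) be the diagonal matrix with entries η applied to the Euclidean norms of the rows of M. Then for every γ with 0 < γ < 2η̲/(L η̄²) and every v×d matrix W, f(W − γ D_η(∇f(W)) ∇f(W)) − f⋆ ≤ (1 − 2μγ(η̲ − (L η̄²/2)γ)) · (f(W) − f⋆). -/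
open Matrix
open scoped RealInnerProductSpace

noncomputable section

/-- The Frobenius inner product `⟪A, B⟫_F = tr(AᵀB)` on `m×n` real matrices,
packaged as an `InnerProductSpace.Core`. -/
def frobeniusCore (m n : ℕ) :
    InnerProductSpace.Core ℝ (Matrix (Fin m) (Fin n) ℝ) where
  inner A B := (Aᵀ * B).trace
  conj_inner_symm := by
    intro x y
    have h : (yᵀ * x).trace = (xᵀ * y).trace := by
      rw [← Matrix.trace_transpose (yᵀ * x), Matrix.transpose_mul,
        Matrix.transpose_transpose]
    simpa using h
  re_inner_nonneg := by
    intro x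
    have h : (xᵀ * x).trace = ∑ j, ∑ i, x i j * x i j := by
      simp [Matrix.trace, Matrix.diag, Matrix.mul_apply]
    have h' : (0 : ℝ) ≤ (xᵀ * x).trace := by
      rw [h]
      exact Finset.sum_nonneg fun j _ => Finset.sum_nonneg fun i _ => mul_self_nonneg _
    simpa using h'
  add_left := by
    intro x y z
    simp [Matrix.transpose_add, Matrix.add_mul]
  smul_left := by
    intro x y r
    simp [Matrix.transpose_smul, Matrix.smul_mul]
  definite := by
    intro x hx
    have h : ∑ j, ∑ i, x i j * x i j = 0 := by
      have h' : (xᵀ * x).trace = ∑ j, ∑ i, x i j * x i j := by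
        simp [Matrix.trace, Matrix.diag, Matrix.mul_apply]
      rw [← h']
      simpa using hx
    ext i j
    have hj : ∀ j' ∈ Finset.univ, (0 : ℝ) ≤ ∑ i', x i' j' * x i' j' :=
      fun j' _ => Finset.sum_nonneg fun i' _ => mul_self_nonneg _
    have h3 : ∑ i', x i' j * x i' j = 0 :=
      (Finset.sum_eq_zero_iff_of_nonneg hj).mp h j (Finset.mem_univ j)
    have h4 : x i j * x i j = 0 :=
      (Finset.sum_eq_zero_iff_of_nonneg fun i' _ => mul_self_nonneg _).mp h3 i
        (Finset.mem_univ i)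
    simpa using mul_self_eq_zero.mp h4

/-- `m×n` real matrices as a normed group under the Frobenius norm. -/
instance (m n : ℕ) : NormedAddCommGroup (Matrix (Fin m) (Fin n) ℝ) :=
  (frobeniusCore m n).toNormedAddCommGroup

/-- `m×n` real matrices with the Frobenius inner product. -/
instance (m n : ℕ) : InnerProductSpace ℝ (Matrix (Fin m) (Fin n) ℝ) :=
  InnerProductSpace.ofCore (frobeniusCore m n).toCore

instance (m n : ℕ) : CompleteSpace (Matrix (Fin m) (Fin n) ℝ) :=
  FiniteDimensional.complete ℝ _

/-!
An `L`-Lipschitz gradient gives the descent inequality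
`f (x + p) ≤ f x + ⟪∇f x, p⟫ + L/2 ‖p‖²`. Scaling the rows of `∇f W` by factors in `[η̲, η̄]`
yields a direction `d` with `⟪∇f W, d⟫ ≥ η̲ ‖∇f W‖²` and `‖d‖ ≤ η̄ ‖∇f W‖`, so the step
`W - γ d` decreases `f` by at least `γ (η̲ - L η̄² γ / 2) ‖∇f W‖²`, which the PL inequality
turns into a contraction of `f W - f⋆`.
-/

section Descent

variable {E : Type*} [NormedAddCommGroup E] [InnerProductSpace ℝ E] [CompleteSpace E]
  {f : E → ℝ} {gradf : E → E} {L : ℝ}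

theorem le_add_inner_add_of_lipschitz_gradient (hgrad : ∀ x, HasGradientAt f (gradf x) x)
    (hlip : ∀ x y, ‖gradf x - gradf y‖ ≤ L * ‖x - y‖) (x p : E) :
    f (x + p) ≤ f x + ⟪gradf x, p⟫ + L / 2 * ‖p‖ ^ 2 := by
  -- Mean value theorem: `φ 1 ≤ φ 0`, since for `t ≥ 0`
  -- `φ' t = ⟪∇f (x + t p) - ∇f x, p⟫ - L t ‖p‖² ≤ 0`.
  set φ : ℝ → ℝ := fun t => f (x + t • p) - t * ⟪gradf x, p⟫ - L / 2 * t ^ 2 * ‖p‖ ^ 2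
  have hφ : ∀ t, HasDerivAt φ (⟪gradf (x + t • p) - gradf x, p⟫ - L * t * ‖p‖ ^ 2) t := by
    intro t
    have hline : HasDerivAt (fun s : ℝ => x + s • p) p t := by
      simpa using ((hasDerivAt_id t).smul_const p).const_add x
    have hf_line : HasDerivAt (fun s : ℝ => f (x + s • p)) ⟪gradf (x + t • p), p⟫ t :=
      (hgrad _).hasFDerivAt.comp_hasDerivAt t hline
    have := (hf_line.sub ((hasDerivAt_id' t).mul_const ⟪gradf x, p⟫)).sub
      (((hasDerivAt_pow 2 t).const_mul (L / 2)).mul_const (‖p‖ ^ 2))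
    exact this.congr_deriv (by rw [inner_sub_left]; push_cast; ring)
  have hφ_cont : Continuous φ := continuous_iff_continuousAt.mpr fun t => (hφ t).continuousAt
  obtain ⟨c, ⟨hc, -⟩, hφc⟩ :=
    exists_hasDerivAt_eq_slope φ _ zero_lt_one hφ_cont.continuousOn fun t _ => hφ t
  have hderiv_nonpos : ⟪gradf (x + c • p) - gradf x, p⟫ ≤ L * c * ‖p‖ ^ 2 := calc
    _ ≤ ‖gradf (x + c • p) - gradf x‖ * ‖p‖ := real_inner_le_norm _ _
    _ ≤ L * ‖c • p‖ * ‖p‖ := by gcongr; simpa using hlip (x + c • p) x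
    _ = L * c * ‖p‖ ^ 2 := by rw [norm_smul, Real.norm_of_nonneg hc.le]; ring
  simp only [φ, one_smul, zero_smul, add_zero] at hφc
  linarith

theorem le_sub_mul_norm_sq_of_lipschitz_gradient (hgrad : ∀ x, HasGradientAt f (gradf x) x)
    (hlip : ∀ x y, ‖gradf x - gradf y‖ ≤ L * ‖x - y‖) (hL : 0 ≤ L) {x d : E} {a b γ : ℝ}
    (hγ : 0 ≤ γ) (hd_inner : a * ‖gradf x‖ ^ 2 ≤ ⟪gradf x, d⟫)
    (hd_norm : ‖d‖ ^ 2 ≤ b ^ 2 * ‖gradf x‖ ^ 2) :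
    f (x - γ • d) ≤ f x - γ * (a - L * b ^ 2 / 2 * γ) * ‖gradf x‖ ^ 2 := by
  have hdescent := le_add_inner_add_of_lipschitz_gradient hgrad hlip x (-(γ • d))
  rw [← sub_eq_add_neg, inner_neg_right, real_inner_smul_right, norm_neg, norm_smul,
    Real.norm_of_nonneg hγ, mul_pow] at hdescent
  have hinner := mul_le_mul_of_nonneg_left hd_inner hγ
  have hnorm := mul_le_mul_of_nonneg_left hd_norm (by positivity : 0 ≤ L / 2 * γ ^ 2)
  linarith

end Descent

section RowScaling

variable {m n : ℕ}

theorem frobenius_inner_eq_sum (A B : Matrix (Fin m) (Fin n) ℝ) :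
    ⟪A, B⟫ = ∑ i, ∑ j, A i j * B i j := by
  change (Aᵀ * B).trace = _
  rw [Finset.sum_comm]
  simp [Matrix.trace, Matrix.mul_apply]

theorem frobenius_norm_sq_eq_sum (A : Matrix (Fin m) (Fin n) ℝ) :
    ‖A‖ ^ 2 = ∑ i, ∑ j, A i j ^ 2 := by
  rw [← real_inner_self_eq_norm_sq, frobenius_inner_eq_sum]
  simp only [sq]

theorem mul_norm_sq_le_inner_diagonal_mul {e : Fin m → ℝ} {a : ℝ} (he : ∀ i, a ≤ e i)
    (G : Matrix (Fin m) (Fin n) ℝ) : a * ‖G‖ ^ 2 ≤ ⟪G, diagonal e * G⟫ := by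
  rw [frobenius_norm_sq_eq_sum, frobenius_inner_eq_sum, Finset.mul_sum]
  refine Finset.sum_le_sum fun i _ => ?_
  rw [Finset.mul_sum]
  refine Finset.sum_le_sum fun j _ => ?_
  rw [diagonal_mul]
  nlinarith [he i, sq_nonneg (G i j)]

theorem norm_diagonal_mul_sq_le {e : Fin m → ℝ} {b : ℝ} (he : ∀ i, |e i| ≤ b)
    (G : Matrix (Fin m) (Fin n) ℝ) : ‖diagonal e * G‖ ^ 2 ≤ b ^ 2 * ‖G‖ ^ 2 := by
  rw [frobenius_norm_sq_eq_sum, frobenius_norm_sq_eq_sum, Finset.mul_sum]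
  refine Finset.sum_le_sum fun i _ => ?_
  rw [Finset.mul_sum]
  refine Finset.sum_le_sum fun j _ => ?_
  have he_sq : e i ^ 2 ≤ b ^ 2 := sq_abs (e i) ▸ pow_le_pow_left₀ (abs_nonneg _) (he i) 2
  rw [diagonal_mul, mul_pow]
  exact mul_le_mul_of_nonneg_right he_sq (sq_nonneg _)

end RowScaling

theorem linear_convergence_PL_row_norm_update_general
    {v d : ℕ} (f : Matrix (Fin v) (Fin d) ℝ → ℝ)
    (gradf : Matrix (Fin v) (Fin d) ℝ → Matrix (Fin v) (Fin d) ℝ)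
    (L : ℝ) (hL : 0 < L)
    (hgrad : ∀ W, HasGradientAt f (gradf W) W)
    (hlip : ∀ X Y, ‖gradf X - gradf Y‖ ≤ L * ‖X - Y‖)
    (μ : ℝ) (fstar : ℝ)
    (hPL : ∀ W, ‖gradf W‖ ^ 2 ≥ 2 * μ * (f W - fstar))
    (η : ℝ → ℝ) (ηlo ηhi : ℝ) (hηlo : 0 < ηlo) (hηle : ηlo ≤ ηhi)
    (hη : ∀ t : ℝ, 0 ≤ t → ηlo ≤ η t ∧ η t ≤ ηhi)
    -- `D_η(M)` is the diagonal matrix of `η` applied to the row norms of `M`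
    (Dη : Matrix (Fin v) (Fin d) ℝ → Matrix (Fin v) (Fin v) ℝ)
    (hDη : ∀ M, Dη M = Matrix.diagonal fun i => η (Real.sqrt (∑ j, (M i j) ^ 2))) :
    ∀ γ : ℝ, 0 < γ → γ < 2 * ηlo / (L * ηhi ^ 2) →
      ∀ W : Matrix (Fin v) (Fin d) ℝ,
        f (W - γ • (Dη (gradf W) * gradf W)) - fstar ≤
          (1 - 2 * μ * γ * (ηlo - L * ηhi ^ 2 / 2 * γ)) * (f W - fstar) := by
  intro γ hγ hγ_lt W
  set G := gradf W
  have hη_row : ∀ i, ηlo ≤ η (√(∑ j, G i j ^ 2)) ∧ η (√(∑ j, G i j ^ 2)) ≤ ηhi :=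
    fun i => hη _ (Real.sqrt_nonneg _)
  have hγ_small : γ * (L * ηhi ^ 2) < 2 * ηlo :=
    (lt_div_iff₀ (by have := hηlo.trans_le hηle; positivity)).mp hγ_lt
  have hrate : 0 ≤ γ * (ηlo - L * ηhi ^ 2 / 2 * γ) := mul_nonneg hγ.le (by linarith)
  have hdecrease :
      f (W - γ • (Dη G * G)) ≤ f W - γ * (ηlo - L * ηhi ^ 2 / 2 * γ) * ‖G‖ ^ 2 := by
    rw [hDη]
    exact le_sub_mul_norm_sq_of_lipschitz_gradient hgrad hlip hL.le hγ.le
      (mul_norm_sq_le_inner_diagonal_mul (fun i => (hη_row i).1) G)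
      (norm_diagonal_mul_sq_le (fun i => abs_le.mpr ⟨by linarith [hη_row i], (hη_row i).2⟩) G)
  calc f (W - γ • (Dη G * G)) - fstar
      ≤ f W - fstar - γ * (ηlo - L * ηhi ^ 2 / 2 * γ) * (2 * μ * (f W - fstar)) := by
        linarith [mul_le_mul_of_nonneg_left (hPL W) hrate]
    _ = (1 - 2 * μ * γ * (ηlo - L * ηhi ^ 2 / 2 * γ)) * (f W - fstar) := by ring

/-- Linear convergence of the row-norm update under the
Polyak–Łojasiewicz condition: if `f` has an `L`-Lipschitz Frobenius gradient,
satisfies the `μ`-PL inequality relative to a lower bound `f⋆`, and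
`0 < η̲ ≤ η(t) ≤ η̄` for all `t ≥ 0`, then for every step size
`0 < γ < 2η̲/(Lη̄²)` and every `v×d` matrix `W`,
`f(W − γ D_η(∇f(W)) ∇f(W)) − f⋆ ≤ (1 − 2μγ(η̲ − (Lη̄²/2)γ))(f(W) − f⋆)`,
where `D_η(M)` is the diagonal matrix of `η` applied to the row norms of `M`. -/
theorem linear_convergence_PL_row_norm_update
    {v d : ℕ} (f : Matrix (Fin v) (Fin d) ℝ → ℝ)
    (gradf : Matrix (Fin v) (Fin d) ℝ → Matrix (Fin v) (Fin d) ℝ)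
    (L : ℝ) (hL : 0 < L)
    (hgrad : ∀ W, HasGradientAt f (gradf W) W)
    (hlip : ∀ X Y, ‖gradf X - gradf Y‖ ≤ L * ‖X - Y‖)
    (μ : ℝ) (hμ : 0 < μ) (fstar : ℝ) (hfstar : ∀ W, fstar ≤ f W)
    (hPL : ∀ W, ‖gradf W‖ ^ 2 ≥ 2 * μ * (f W - fstar))
    (η : ℝ → ℝ) (ηlo ηhi : ℝ) (hηlo : 0 < ηlo) (hηle : ηlo ≤ ηhi)
    (hη : ∀ t : ℝ, 0 ≤ t → ηlo ≤ η t ∧ η t ≤ ηhi)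
    -- `D_η(M)` is the diagonal matrix of `η` applied to the row norms of `M`
    (Dη : Matrix (Fin v) (Fin d) ℝ → Matrix (Fin v) (Fin v) ℝ)
    (hDη : ∀ M, Dη M = Matrix.diagonal fun i => η (Real.sqrt (∑ j, (M i j) ^ 2))) :
    ∀ γ : ℝ, 0 < γ → γ < 2 * ηlo / (L * ηhi ^ 2) →
      ∀ W : Matrix (Fin v) (Fin d) ℝ,
        f (W - γ • (Dη (gradf W) * gradf W)) - fstar ≤
          (1 - 2 * μ * γ * (ηlo - L * ηhi ^ 2 / 2 * γ)) * (f W - fstar) :=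
  linear_convergence_PL_row_norm_update_general f gradf L hL hgrad hlip μ fstar hPL η ηlo ηhi hηlo
    hηle hη Dη hDη

end
end
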